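/- arXiv:2602.21827 — 2 statements merged into one kernel-verified Lean document; each statement's English description precedes it below -/
import Mathlib

section
/- (Borrowing values) Let σ_S be a non-idling schedule and σ_O any schedule of the same instance, and fix a reference time t ≥ 0; all quantities A(t), y_j, p_j(t), R_j refer to σ_S, and O(t) = {j ∈ J : r j ≤ t < C^O_j}. Then there exists a function β : J × J → ℝ with β(j,i) ≥ 0 for all j,i, such that: (i) β(j,i) = 0 unless j ∈ A(t)∖O(t), i ∈ O(t) and i ∈ R_j; (ii) ∑_{i∈O(t)} β(j,i) = p_j(t) for every j ∈ A(t)∖O(t); and (iii) ∑_{j∈A(t)∖O(t)} β(j,i) ≤ y_i(t) for every i ∈ O(t). -/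
open MeasureTheory Set

open scoped Classical

noncomputable section

variable {J : Type*}

/-- Total work done on job `j` by time `u` under the schedule `σ`. -/
def workDone (σ : ℝ → J → ℝ) (j : J) (u : ℝ) : ℝ := ∫ v in (0:ℝ)..u, σ v j

/-- Remaining processing time of job `j` at time `u`. -/
def remT (p : J → ℝ) (σ : ℝ → J → ℝ) (j : J) (u : ℝ) : ℝ := p j - workDone σ j u

/-- Completion time of job `j`: the least `u` with `workDone σ j u = p j`,
    and `⊤` if the job never completes. -/
def cTime (p : J → ℝ) (σ : ℝ → J → ℝ) (j : J) : EReal :=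
  sInf ((fun v : ℝ => (v : EReal)) '' {v : ℝ | workDone σ j v = p j})

/-- Job `j` is available at time `u`: released and not yet completed. -/
def availAt (r p : J → ℝ) (σ : ℝ → J → ℝ) (u : ℝ) (j : J) : Prop :=
  r j ≤ u ∧ (u : EReal) < cTime p σ j

/-- Job `j` is processed at time `u`. -/
def procAt (σ : ℝ → J → ℝ) (u : ℝ) (j : J) : Prop := 0 < σ u j

/-- Job `j` is non-clairvoyant at time `u`. -/
def ncAt (r p : J → ℝ) (α : ℝ) (σ : ℝ → J → ℝ) (u : ℝ) (j : J) : Prop :=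
  availAt r p σ u j ∧ workDone σ j u ≤ α * p j

/-- Job `j` is clairvoyant at time `u`. -/
def clAt (r p : J → ℝ) (α : ℝ) (σ : ℝ → J → ℝ) (u : ℝ) (j : J) : Prop :=
  availAt r p σ u j ∧ α * p j < workDone σ j u

/-- The time at which job `j` emits its signal: the least `u` with
    `workDone σ j u = α * p j`. -/
def emitT (p : J → ℝ) (α : ℝ) (σ : ℝ → J → ℝ) (j : J) : ℝ :=
  sInf {u : ℝ | workDone σ j u = α * p j}

/-- Data of an instance: nonnegative release dates, positive processing times
    and `α ∈ (0,1)`. -/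
structure IsInstance (r p : J → ℝ) (α : ℝ) : Prop where
  r_nonneg : ∀ j, 0 ≤ r j
  p_pos : ∀ j, 0 < p j
  alpha_mem : α ∈ Set.Ioo (0 : ℝ) 1

/-- `σ` is a (feasible, preemptive, single machine) schedule. -/
structure IsSchedule [Fintype J] (r p : J → ℝ) (σ : ℝ → J → ℝ) : Prop where
  meas : ∀ j, Measurable fun u => σ u j
  nonneg : ∀ u j, 0 ≤ σ u j
  sum_le_one : ∀ u, ∑ j, σ u j ≤ 1
  zero_before_release : ∀ u j, u < r j → σ u j = 0
  workDone_le : ∀ u j, workDone σ j u ≤ p j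

/-- A schedule is non-idling if it uses the full machine capacity whenever
    some job is available. -/
def NonIdling [Fintype J] (r p : J → ℝ) (σ : ℝ → J → ℝ) : Prop :=
  ∀ u, (∃ j, availAt r p σ u j) → ∑ j, σ u j = 1

/-- The SRPT condition at time `u`: `Cl(u) ≠ ∅` and
    `min_{j ∈ Cl(u)} p_j(u) ≤ ((1-α)/α) · min_{j ∈ N(u)} y_j(u)`
    (the minimum over the empty set being `+∞`). -/
def SrptCond (r p : J → ℝ) (α : ℝ) (σ : ℝ → J → ℝ) (u : ℝ) : Prop :=
  ∃ k, clAt r p α σ u k ∧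
    ∀ j, ncAt r p α σ u j → remT p σ k u ≤ ((1 - α) / α) * workDone σ j u

/-- `k` is a clairvoyant job of minimal remaining processing time at `u`,
    emitting last among those. -/
def IsSrptChoice (r p : J → ℝ) (α : ℝ) (σ : ℝ → J → ℝ) (u : ℝ) (k : J) : Prop :=
  clAt r p α σ u k ∧
    (∀ j, clAt r p α σ u j → remT p σ k u ≤ remT p σ j u) ∧
    (∀ j, clAt r p α σ u j → remT p σ j u = remT p σ k u →
      emitT p α σ j ≤ emitT p α σ k)

/-- `j` is a non-clairvoyant job with minimal progress at time `u`. -/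
def IsMinNc (r p : J → ℝ) (α : ℝ) (σ : ℝ → J → ℝ) (u : ℝ) (j : J) : Prop :=
  ncAt r p α σ u j ∧ ∀ j', ncAt r p α σ u j' → workDone σ j u ≤ workDone σ j' u

/-- `σ` is an ALG-schedule: non-idling, and at any time with available jobs it
    either runs a single clairvoyant job of shortest remaining processing time
    (breaking ties by latest emission) when the SRPT condition holds, or it runs
    exactly the non-clairvoyant jobs of minimal progress at equal rates. -/
structure IsALG [Fintype J] (r p : J → ℝ) (α : ℝ) (σ : ℝ → J → ℝ) : Prop where
  sched : IsSchedule r p σ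
  nonidling : NonIdling r p σ
  srpt_branch : ∀ u, (∃ j, availAt r p σ u j) → SrptCond r p α σ u →
    ∃ k, IsSrptChoice r p α σ u k ∧ ∀ j, j ≠ k → σ u j = 0
  setf_branch : ∀ u, (∃ j, availAt r p σ u j) → ¬ SrptCond r p α σ u →
    (∀ j, procAt σ u j → IsMinNc r p α σ u j) ∧
    (∀ j j', IsMinNc r p α σ u j → IsMinNc r p α σ u j' → σ u j = σ u j')

/-- Right endpoint `min (C_j, t)` of the lifetime of `j` w.r.t. reference time `t`. -/
def lifeEnd (p : J → ℝ) (σ : ℝ → J → ℝ) (t : ℝ) (j : J) : ℝ :=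
  (min (cTime p σ j) (t : EReal)).toReal

/-- The lifetime `I_j = [r j, min (C_j, t)]` of job `j`. -/
def lifetime (r p : J → ℝ) (σ : ℝ → J → ℝ) (t : ℝ) (j : J) : Set ℝ :=
  Set.Icc (r j) (lifeEnd p σ t j)

/-- `E_N`-edge of the borrow graph: `i` is processed at some time of `I_j`
    while being non-clairvoyant. -/
def ENedge (r p : J → ℝ) (α : ℝ) (σ : ℝ → J → ℝ) (t : ℝ) (j i : J) : Prop :=
  ∃ u ∈ lifetime r p σ t j, procAt σ u i ∧ ncAt r p α σ u i

/-- `E_C`-edge of the borrow graph: `i` is processed at some time of `I_j`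
    while being clairvoyant. -/
def ECedge (r p : J → ℝ) (α : ℝ) (σ : ℝ → J → ℝ) (t : ℝ) (j i : J) : Prop :=
  ∃ u ∈ lifetime r p σ t j, procAt σ u i ∧ clAt r p α σ u i

/-- Edge of the borrow graph `G_B`. -/
def borrowEdge (r p : J → ℝ) (α : ℝ) (σ : ℝ → J → ℝ) (t : ℝ) (j i : J) : Prop :=
  ENedge r p α σ t j i ∨ ECedge r p α σ t j i

/-- `reaches j i` iff `i ∈ R_j`, i.e. `i` is reachable from `j` in the borrow
    graph (`j` itself included). -/
def reaches (r p : J → ℝ) (α : ℝ) (σ : ℝ → J → ℝ) (t : ℝ) : J → J → Prop :=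
  Relation.ReflTransGen (borrowEdge r p α σ t)

/-- Truncated progress `ȳ_j = min (y_j(t), α p_j)`. -/
def truncY (p : J → ℝ) (α : ℝ) (σ : ℝ → J → ℝ) (t : ℝ) (j : J) : ℝ :=
  min (workDone σ j t) (α * p j)

end

/-!
The borrowing values form a fractional transportation plan from the jobs `j ∈ A(t) ∖ O(t)`, with
demand `p_j(t)`, to the jobs `i ∈ O(t)`, with capacity `y_i(t)`, along reachability in the borrow
graph. By the fractional form of Hall's theorem it suffices that the demand of every set `S` is at
most the capacity of its neighbourhood; Hall's theorem itself holds because a plan of maximal total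
value (one exists by compactness) admits no augmenting alternating path.

For Hall's condition, let `Q` be the set of jobs reachable from `S` and `m` their earliest release
date. The lifetimes of `Q` cover `[m, t]` and `Q` is closed under borrowing, so the non-idling
`σ_S` works only on `Q` during `[m, t]`, whence `∑_Q y_i(t) ≥ t - m`. The jobs of `Q ∖ O(t)` are
released after `m` and completed by `t` under `σ_O`, so their sizes add up to at most `t - m`.
Hence `∑_S p_j(t) ≤ ∑_{Q ∖ O(t)} (p_i - y_i(t)) ≤ ∑_{Q ∩ O(t)} y_i(t)`.
-/

open Filter Topology

section Flow

variable {ι κ : Type*} [Fintype ι] [Fintype κ]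

def netFlow (D : ι → κ → ℝ) : ι ⊕ κ → ℝ :=
  Sum.elim (fun a => ∑ b, D a b) (fun b => -∑ a, D a b)

lemma netFlow_add (D E : ι → κ → ℝ) : netFlow (D + E) = netFlow D + netFlow E := by
  funext v
  cases v <;> simp [netFlow, Finset.sum_add_distrib, add_comm]

lemma netFlow_sub (D E : ι → κ → ℝ) : netFlow (D - E) = netFlow D - netFlow E := by
  funext v
  cases v <;> simp [netFlow, Finset.sum_sub_distrib, neg_add_eq_sub]

omit [Fintype ι] [Fintype κ] in
lemma single_single_apply (j a : ι) (i b : κ) :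
    (Pi.single j (Pi.single i 1) : ι → κ → ℝ) a b = if a = j ∧ b = i then 1 else 0 := by
  by_cases ha : a = j
  · subst ha; simp [Pi.single_apply]
  · simp [ha]

lemma netFlow_single (j : ι) (i : κ) :
    netFlow (Pi.single j (Pi.single i 1)) = Pi.single (.inl j) 1 - Pi.single (.inr i) 1 := by
  funext v
  cases v with
  | inl a => by_cases h : a = j <;> simp [netFlow, Pi.single_apply, h]
  | inr b => simp [netFlow, ← Finset.sum_apply, Pi.single_apply]

def residualAdj (Rel : ι → κ → Prop) (β : ι → κ → ℝ) : ι ⊕ κ → ι ⊕ κ → Prop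
  | .inl j, .inr i => Rel j i
  | .inr i, .inl j => 0 < β j i
  | _, _ => False

lemma exists_augmenting_direction {Rel : ι → κ → Prop} {β : ι → κ → ℝ}
    (hβ : ∀ a b, β a b ≠ 0 → Rel a b) {j₀ : ι} {v : ι ⊕ κ}
    (h : Relation.ReflTransGen (residualAdj Rel β) (.inl j₀) v) :
    ∃ D : ι → κ → ℝ, (∀ a b, D a b ≠ 0 → Rel a b) ∧ (∀ a b, D a b < 0 → 0 < β a b) ∧
      netFlow D = Pi.single (.inl j₀) 1 - Pi.single v 1 := by
  induction h with
  | refl => exact ⟨0, by simp, by simp, by ext v; cases v <;> simp [netFlow]⟩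
  | @tail u w _ huw ih =>
    obtain ⟨D, hDRel, hDneg, hDflow⟩ := ih
    match u, w, huw with
    | .inl j, .inr i, (hji : Rel j i) =>
      refine ⟨D + Pi.single j (Pi.single i 1), fun a b hab => ?_, fun a b hab => ?_, ?_⟩
      · by_cases h : a = j ∧ b = i
        · obtain ⟨rfl, rfl⟩ := h; exact hji
        · exact hDRel a b (by simpa [single_single_apply, h] using hab)
      · by_cases h : a = j ∧ b = i
        · obtain ⟨rfl, rfl⟩ := h; exact hDneg a b (by simp at hab; linarith)
        · exact hDneg a b (by simpa [single_single_apply, h] using hab)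
      · rw [netFlow_add, hDflow, netFlow_single]; abel
    | .inr i, .inl j, (hji : 0 < β j i) =>
      refine ⟨D - Pi.single j (Pi.single i 1), fun a b hab => ?_, fun a b hab => ?_, ?_⟩
      · by_cases h : a = j ∧ b = i
        · obtain ⟨rfl, rfl⟩ := h; exact hβ a b hji.ne'
        · exact hDRel a b (by simpa [single_single_apply, h] using hab)
      · by_cases h : a = j ∧ b = i
        · obtain ⟨rfl, rfl⟩ := h; exact hji
        · exact hDneg a b (by simpa [single_single_apply, h] using hab)
      · rw [netFlow_sub, hDflow, netFlow_single]; abel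

def feasibleFlows (d : ι → ℝ) (s : κ → ℝ) (Rel : ι → κ → Prop) : Set (ι → κ → ℝ) :=
  {β | (∀ a b, 0 ≤ β a b) ∧ (∀ a b, β a b ≠ 0 → Rel a b) ∧
    (∀ a, ∑ b, β a b ≤ d a) ∧ (∀ b, ∑ a, β a b ≤ s b)}

lemma isCompact_feasibleFlows (d : ι → ℝ) (s : κ → ℝ) (Rel : ι → κ → Prop) :
    IsCompact (feasibleFlows d s Rel) := by
  have hclosed : IsClosed (feasibleFlows d s Rel) := by
    simp only [feasibleFlows, Set.ofPred_and, Set.ofPred_forall]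
    refine .inter ?_ (.inter ?_ (.inter ?_ ?_))
    · exact isClosed_iInter fun a => isClosed_iInter fun b =>
        isClosed_le continuous_const (by fun_prop)
    · refine isClosed_iInter fun a => isClosed_iInter fun b => ?_
      by_cases hR : Rel a b
      · simp [hR]
      · simpa [hR] using isClosed_eq (by fun_prop) continuous_const
    · exact isClosed_iInter fun a => isClosed_le (by fun_prop) continuous_const
    · exact isClosed_iInter fun b => isClosed_le (by fun_prop) continuous_const
  refine .of_isClosed_subset (isCompact_univ_pi fun _ =>
    isCompact_univ_pi fun b => isCompact_Icc (a := 0) (b := s b)) hclosed ?_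
  rintro β ⟨h0, -, -, hcol⟩ a - b -
  exact ⟨h0 a b, (Finset.single_le_sum (fun a' _ => h0 a' b) (Finset.mem_univ a)).trans (hcol b)⟩

variable {d : ι → ℝ} {s : κ → ℝ} {Rel : ι → κ → Prop} {β : ι → κ → ℝ}

omit [Fintype ι] [Fintype κ] in
lemma eventually_nonneg_add_mul {x k : ℝ} (hx : 0 ≤ x) (h : 0 < x ∨ 0 ≤ k) :
    ∀ᶠ ε in 𝓝[>] (0 : ℝ), 0 ≤ x + ε * k := by
  rcases h with hx' | hk
  · have : Tendsto (fun ε => x + ε * k) (𝓝[>] 0) (𝓝 x) :=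
      ((by fun_prop : Continuous fun ε : ℝ => x + ε * k).tendsto' 0 _ (by simp)).mono_left
        nhdsWithin_le_nhds
    exact (this.eventually_const_lt hx').mono fun ε => le_of_lt
  · filter_upwards [self_mem_nhdsWithin] with ε (hε : 0 < ε)
    positivity

lemma add_smul_mem_feasibleFlows {D : ι → κ → ℝ} {ε : ℝ} (hβ : β ∈ feasibleFlows d s Rel)
    (hDRel : ∀ a b, D a b ≠ 0 → Rel a b) (hnonneg : ∀ a b, 0 ≤ β a b + ε * D a b)
    (hrow : ∀ a, ∑ b, β a b + ε * ∑ b, D a b ≤ d a)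
    (hcol : ∀ b, ∑ a, β a b + ε * ∑ a, D a b ≤ s b) :
    β + ε • D ∈ feasibleFlows d s Rel := by
  refine ⟨fun a b => by simpa using hnonneg a b, fun a b hab => ?_, fun a => ?_, fun b => ?_⟩
  · by_contra hR
    simp [not_not.1 (mt (hβ.2.1 a b) hR), not_not.1 (mt (hDRel a b) hR)] at hab
  · simpa [Finset.sum_add_distrib, Finset.mul_sum] using hrow a
  · simpa [Finset.sum_add_distrib, Finset.mul_sum] using hcol b

lemma sum_col_eq_of_isMaxOn (hβ : β ∈ feasibleFlows d s Rel)
    (hmax : IsMaxOn (fun β => ∑ a, ∑ b, β a b) (feasibleFlows d s Rel) β) {j₀ : ι}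
    (hj₀ : ∑ b, β j₀ b < d j₀) {i : κ}
    (hi : Relation.ReflTransGen (residualAdj Rel β) (.inl j₀) (.inr i)) :
    ∑ a, β a i = s i := by
  by_contra hne
  have hi' : ∑ a, β a i < s i := (hβ.2.2.2 i).lt_of_ne hne
  obtain ⟨D, hDRel, hDneg, hDflow⟩ := exists_augmenting_direction hβ.2.1 hi
  have hrowD : ∀ a, ∑ b, D a b = if a = j₀ then 1 else 0 := fun a => by
    simpa [netFlow, Pi.single_apply] using congr_fun hDflow (.inl a)
  have hcolD : ∀ b, ∑ a, D a b = if b = i then 1 else 0 := fun b => by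
    simpa [netFlow, Pi.single_apply] using congr_fun hDflow (.inr b)
  have hentry : ∀ a b, ∀ᶠ ε in 𝓝[>] (0 : ℝ), 0 ≤ β a b + ε * D a b := fun a b =>
    eventually_nonneg_add_mul (hβ.1 a b) ((le_or_gt 0 (D a b)).symm.imp_left (hDneg a b))
  obtain ⟨ε, hε, hεrow, hεcol, hεβ⟩ : ∃ ε : ℝ, 0 < ε ∧ ε < d j₀ - ∑ b, β j₀ b ∧
      ε < s i - ∑ a, β a i ∧ ∀ a b, 0 ≤ β a b + ε * D a b :=
    (eventually_mem_nhdsWithin.and <|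
      ((eventually_lt_nhds (sub_pos.2 hj₀)).filter_mono nhdsWithin_le_nhds).and <|
      ((eventually_lt_nhds (sub_pos.2 hi')).filter_mono nhdsWithin_le_nhds).and <|
      eventually_all.2 fun a => eventually_all.2 (hentry a)).exists
  have hmem : β + ε • D ∈ feasibleFlows d s Rel := by
    refine add_smul_mem_feasibleFlows hβ hDRel hεβ (fun a => ?_) (fun b => ?_)
    · rw [hrowD]
      split_ifs with ha
      · subst ha; linarith
      · linarith [hβ.2.2.1 a]
    · rw [hcolD]
      split_ifs with hb
      · subst hb; linarith
      · linarith [hβ.2.2.2 b]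
  have hle : ∑ a, ∑ b, (β + ε • D) a b ≤ ∑ a, ∑ b, β a b := hmax hmem
  simp only [Pi.add_apply, Pi.smul_apply, smul_eq_mul, Finset.sum_add_distrib, ← Finset.mul_sum,
    hrowD, Finset.sum_ite_eq', Finset.mem_univ, if_true] at hle
  linarith

lemma sum_row_eq_of_isMaxOn (hs : ∀ i, 0 ≤ s i)
    (hall : ∀ S : Finset ι, ∑ j ∈ S, d j ≤ ∑ i with ∃ j ∈ S, Rel j i, s i)
    (hβ : β ∈ feasibleFlows d s Rel)
    (hmax : IsMaxOn (fun β => ∑ a, ∑ b, β a b) (feasibleFlows d s Rel) β) (j₀ : ι) :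
    ∑ b, β j₀ b = d j₀ := by
  by_contra hne
  have hj₀ : ∑ b, β j₀ b < d j₀ := (hβ.2.2.1 j₀).lt_of_ne hne
  let reach := Relation.ReflTransGen (residualAdj Rel β) (.inl j₀)
  let S : Finset ι := {j | reach (.inl j)}
  let T : Finset κ := {i | reach (.inr i)}
  have hST : ({i | ∃ j ∈ S, Rel j i} : Finset κ) ⊆ T := by
    intro i
    simp only [Finset.mem_filter, Finset.mem_univ, true_and, S, T]
    rintro ⟨j, hj, hji⟩
    exact hj.tail hji
  have hTS : ∀ i ∈ T, ∑ a ∈ S, β a i = s i := by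
    intro i hi
    simp only [Finset.mem_filter, Finset.mem_univ, true_and, T] at hi
    rw [← sum_col_eq_of_isMaxOn hβ hmax hj₀ hi]
    refine Finset.sum_subset (Finset.subset_univ S) fun a _ ha => ?_
    by_contra hpos
    have hedge : residualAdj Rel β (.inr i) (.inl a) := (hβ.1 a i).lt_of_ne' hpos
    exact ha (by simpa [S] using hi.tail hedge)
  refine lt_irrefl (∑ j ∈ S, d j) ?_
  calc ∑ j ∈ S, d j
      ≤ ∑ i ∈ T, s i :=
        (hall S).trans (Finset.sum_le_sum_of_subset_of_nonneg hST fun i _ _ => hs i)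
    _ = ∑ a ∈ S, ∑ i ∈ T, β a i := by
        rw [Finset.sum_comm]
        exact (Finset.sum_congr rfl hTS).symm
    _ ≤ ∑ a ∈ S, ∑ i, β a i := Finset.sum_le_sum fun a _ =>
        Finset.sum_le_sum_of_subset_of_nonneg (Finset.subset_univ T) fun i _ _ => hβ.1 a i
    _ < ∑ j ∈ S, d j := Finset.sum_lt_sum (fun j _ => hβ.2.2.1 j)
        ⟨j₀, by simp [S, reach, Relation.ReflTransGen.refl], hj₀⟩

theorem exists_flow_of_hall (hd : ∀ j, 0 ≤ d j) (hs : ∀ i, 0 ≤ s i)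
    (hall : ∀ S : Finset ι, ∑ j ∈ S, d j ≤ ∑ i with ∃ j ∈ S, Rel j i, s i) :
    ∃ β : ι → κ → ℝ, (∀ j i, 0 ≤ β j i) ∧ (∀ j i, β j i ≠ 0 → Rel j i) ∧
      (∀ j, ∑ i, β j i = d j) ∧ (∀ i, ∑ j, β j i ≤ s i) := by
  have hzero : (0 : ι → κ → ℝ) ∈ feasibleFlows d s Rel :=
    ⟨fun _ _ => le_rfl, fun _ _ h => absurd rfl h, by simpa using hd, by simpa using hs⟩
  obtain ⟨β, hβ, hmax⟩ := (isCompact_feasibleFlows d s Rel).exists_isMaxOn ⟨0, hzero⟩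
    (by fun_prop : Continuous fun β : ι → κ → ℝ => ∑ a, ∑ b, β a b).continuousOn
  exact ⟨β, hβ.1, hβ.2.1, sum_row_eq_of_isMaxOn hs hall hβ hmax, hβ.2.2.2⟩

theorem exists_flow_of_hall_on (L : ι → Prop) (R : κ → Prop) [DecidablePred L]
    [DecidablePred R]
    (hd : ∀ j, L j → 0 ≤ d j) (hs : ∀ i, R i → 0 ≤ s i)
    (hall : ∀ S : Finset ι, (∀ j ∈ S, L j) →
      ∑ j ∈ S, d j ≤ ∑ i with R i ∧ ∃ j ∈ S, Rel j i, s i) :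
    ∃ β : ι → κ → ℝ, (∀ j i, 0 ≤ β j i) ∧ (∀ j i, β j i ≠ 0 → L j ∧ R i ∧ Rel j i) ∧
      (∀ j, L j → ∑ i with R i, β j i = d j) ∧ (∀ i, R i → ∑ j with L j, β j i ≤ s i) := by
  obtain ⟨β, hβ0, hβRel, hrow, hcol⟩ := exists_flow_of_hall
    (d := fun j => if L j then d j else 0) (s := fun i => if R i then s i else 0)
    (Rel := fun j i => L j ∧ R i ∧ Rel j i)
    (fun j => by split_ifs with h <;> simp [hd j, h])
    (fun i => by split_ifs with h <;> simp [hs i, h])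
    (fun S => by
      rw [← Finset.sum_filter, ← Finset.sum_filter]
      convert hall (S.filter L) (fun j hj => (Finset.mem_filter.1 hj).2) using 2
      ext i; simp only [Finset.mem_filter]; aesop)
  refine ⟨β, hβ0, hβRel, fun j hj => ?_, fun i hi => ?_⟩
  · rw [Finset.sum_filter_of_ne fun i _ h => (hβRel j i h).2.1, hrow, if_pos hj]
  · calc ∑ j with L j, β j i ≤ ∑ j, β j i :=
          Finset.sum_le_sum_of_subset_of_nonneg (Finset.filter_subset _ _) fun j _ _ => hβ0 j i
      _ ≤ s i := by simpa [hi] using hcol i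

end Flow

section Schedule

variable {J : Type*} [Fintype J] {r p : J → ℝ} {σ : ℝ → J → ℝ} {j : J} {t u : ℝ}

lemma IsSchedule.le_one (hσ : IsSchedule r p σ) (u : ℝ) (j : J) : σ u j ≤ 1 :=
  (Finset.single_le_sum (fun i _ => hσ.nonneg u i) (Finset.mem_univ j)).trans (hσ.sum_le_one u)

lemma IsSchedule.intervalIntegrable (hσ : IsSchedule r p σ) (j : J) (a b : ℝ) :
    IntervalIntegrable (fun u => σ u j) volume a b :=
  (intervalIntegrable_const (c := (1 : ℝ))).mono_fun (hσ.meas j).aestronglyMeasurable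
    (ae_of_all _ fun u => by simpa [abs_of_nonneg (hσ.nonneg u j)] using hσ.le_one u j)

lemma IsSchedule.intervalIntegrable_sum (hσ : IsSchedule r p σ) (Q : Finset J) (a b : ℝ) :
    IntervalIntegrable (fun u => ∑ i ∈ Q, σ u i) volume a b := by
  simpa only [Finset.sum_fn] using IntervalIntegrable.sum Q fun i _ => hσ.intervalIntegrable i a b

lemma IsSchedule.workDone_sub_workDone (hσ : IsSchedule r p σ) (j : J) (a b : ℝ) :
    workDone σ j b - workDone σ j a = ∫ v in a..b, σ v j :=
  intervalIntegral.integral_interval_sub_left (hσ.intervalIntegrable j 0 b)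
    (hσ.intervalIntegrable j 0 a)

omit [Fintype J] in
lemma workDone_zero (σ : ℝ → J → ℝ) (j : J) : workDone σ j 0 = 0 :=
  intervalIntegral.integral_same

lemma IsSchedule.monotone_workDone (hσ : IsSchedule r p σ) (j : J) :
    Monotone (workDone σ j) := fun a b hab => by
  have := intervalIntegral.integral_nonneg (μ := volume) hab fun u _ => hσ.nonneg u j
  linarith [hσ.workDone_sub_workDone j a b]

lemma IsSchedule.workDone_nonneg (hσ : IsSchedule r p σ) (j : J) (hu : 0 ≤ u) :
    0 ≤ workDone σ j u :=
  workDone_zero σ j ▸ hσ.monotone_workDone j hu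

lemma IsSchedule.continuous_workDone (hσ : IsSchedule r p σ) (j : J) :
    Continuous (workDone σ j) :=
  intervalIntegral.continuous_primitive (hσ.intervalIntegrable j) 0

lemma IsSchedule.workDone_eq_zero_of_le_release (hσ : IsSchedule r p σ) (h0 : 0 ≤ u)
    (hu : u ≤ r j) : workDone σ j u = 0 := by
  rw [workDone, intervalIntegral.integral_of_le h0, integral_Ioc_eq_integral_Ioo]
  exact setIntegral_eq_zero_of_forall_eq_zero fun v hv =>
    hσ.zero_before_release v j (hv.2.trans_le hu)

lemma IsSchedule.cTime_le_iff (hσ : IsSchedule r p σ) (hp : 0 < p j) (c : ℝ) :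
    cTime p σ j ≤ c ↔ workDone σ j c = p j := by
  refine ⟨fun h => ?_, fun h => sInf_le ⟨c, h, rfl⟩⟩
  set F := {v : ℝ | workDone σ j v = p j}
  have hne : F.Nonempty := by
    by_contra hF
    rw [Set.not_nonempty_iff_eq_empty] at hF
    simp [cTime, F, hF] at h
  have hbdd : BddBelow F := ⟨0, fun v (hv : workDone σ j v = p j) => by
    by_contra hv0
    have := hσ.monotone_workDone j (not_le.1 hv0).le
    rw [workDone_zero, hv] at this
    linarith⟩
  have hleast := (isClosed_eq (hσ.continuous_workDone j) continuous_const).isLeast_csInf hne hbdd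
  have hc : cTime p σ j = (sInf F : ℝ) :=
    (EReal.coe_strictMono.monotone.map_isLeast hleast).isGLB.sInf_eq
  rw [hc, EReal.coe_le_coe_iff] at h
  exact le_antisymm (hσ.workDone_le c j) (hleast.1 ▸ hσ.monotone_workDone j h)

lemma IsSchedule.availAt_iff (hσ : IsSchedule r p σ) (hp : 0 < p j) :
    availAt r p σ u j ↔ r j ≤ u ∧ workDone σ j u < p j := by
  rw [availAt, ← not_le, hσ.cTime_le_iff hp, (hσ.workDone_le u j).lt_iff_ne]

lemma IsSchedule.cTime_ne_bot (hσ : IsSchedule r p σ) (hp : 0 < p j) : cTime p σ j ≠ ⊥ :=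
  fun h => by
    have := (hσ.cTime_le_iff hp (-1)).1 (h ▸ bot_le)
    have := hσ.monotone_workDone j (show (-1 : ℝ) ≤ 0 by norm_num)
    rw [workDone_zero] at this
    linarith

lemma IsSchedule.ae_eq_zero_of_workDone_eq (hσ : IsSchedule r p σ) (hp : 0 < p j) :
    ∀ᵐ v, workDone σ j v = p j → σ v j = 0 := by
  by_cases htop : cTime p σ j = ⊤
  · filter_upwards with v hv
    simpa [htop] using (hσ.cTime_le_iff hp v).2 hv
  obtain ⟨c, hc⟩ : ∃ c : ℝ, cTime p σ j = c :=
    ⟨_, (EReal.coe_toReal htop (hσ.cTime_ne_bot hp)).symm⟩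
  have hF : ∀ v, workDone σ j v = p j ↔ c ≤ v := fun v => by
    rw [← hσ.cTime_le_iff hp, hc, EReal.coe_le_coe_iff]
  have hIoc : ∀ n : ℕ, ∀ᵐ v ∂volume.restrict (Ioc c (c + n)), σ v j = 0 := fun n => by
    refine (intervalIntegral.integral_eq_zero_iff_of_le_of_nonneg_ae (by simp)
      (ae_of_all _ fun v => hσ.nonneg v j) (hσ.intervalIntegrable j _ _)).1 ?_
    rw [← hσ.workDone_sub_workDone, (hF _).2 le_rfl, (hF _).2 (by simp), sub_self]
  have hIoi : ∀ᵐ v ∂volume.restrict (Ioi c), σ v j = 0 := by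
    rw [← iUnion_Ioc_eq_Ioi_self_iff (f := fun n : ℕ => c + n) |>.2 fun x _ =>
      ⟨⌈x - c⌉₊, by linarith [Nat.le_ceil (x - c)]⟩, ae_restrict_iUnion_iff]
    exact hIoc
  rw [ae_restrict_congr_set Ioi_ae_eq_Ici, ae_restrict_iff' measurableSet_Ici] at hIoi
  filter_upwards [hIoi] with v hv hw using hv ((hF v).1 hw)

lemma IsSchedule.ae_availAt_of_procAt (hσ : IsSchedule r p σ) (hp : ∀ j, 0 < p j) :
    ∀ᵐ v, ∀ j, procAt σ v j → availAt r p σ v j := by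
  refine ae_all_iff.2 fun j => ?_
  filter_upwards [hσ.ae_eq_zero_of_workDone_eq (hp j)] with v hv hproc
  rw [hσ.availAt_iff (hp j)]
  exact ⟨not_lt.1 fun h => hproc.ne' (hσ.zero_before_release v j h),
    (hσ.workDone_le v j).lt_of_ne fun h => hproc.ne' (hv h)⟩

lemma IsSchedule.coe_lifeEnd (hσ : IsSchedule r p σ) (hp : 0 < p j) (t : ℝ) :
    (lifeEnd p σ t j : EReal) = min (cTime p σ j) t :=
  EReal.coe_toReal ((min_le_right _ _).trans_lt (EReal.coe_lt_top t)).ne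
    (by simp [hσ.cTime_ne_bot hp])

lemma IsSchedule.lifeEnd_le (hσ : IsSchedule r p σ) (hp : 0 < p j) (t : ℝ) :
    lifeEnd p σ t j ≤ t := by
  rw [← EReal.coe_le_coe_iff, hσ.coe_lifeEnd hp]
  exact min_le_right _ _

lemma IsSchedule.lt_lifeEnd_iff (hσ : IsSchedule r p σ) (hp : 0 < p j) :
    u < lifeEnd p σ t j ↔ (u : EReal) < cTime p σ j ∧ u < t := by
  rw [← EReal.coe_lt_coe_iff, hσ.coe_lifeEnd hp, lt_min_iff, EReal.coe_lt_coe_iff]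

lemma IsSchedule.le_lifeEnd_iff (hσ : IsSchedule r p σ) (hp : 0 < p j) :
    u ≤ lifeEnd p σ t j ↔ (u : EReal) ≤ cTime p σ j ∧ u ≤ t := by
  rw [← EReal.coe_le_coe_iff, hσ.coe_lifeEnd hp, le_min_iff, EReal.coe_le_coe_iff]

omit [Fintype J] in
lemma lifeEnd_eq_of_availAt (h : availAt r p σ t j) : lifeEnd p σ t j = t := by
  rw [lifeEnd, min_eq_right h.2.le, EReal.toReal_coe]

end Schedule

section BorrowGraph

variable {J : Type*} [Fintype J] {r p : J → ℝ} {α : ℝ} {σ : ℝ → J → ℝ} {t : ℝ} {i j : J}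

omit [Fintype J] in
lemma borrowEdge_iff : borrowEdge r p α σ t j i ↔
    ∃ u ∈ lifetime r p σ t j, procAt σ u i ∧ availAt r p σ u i := by
  refine ⟨?_, fun ⟨u, hu, hproc, havail⟩ => ?_⟩
  · rintro (⟨u, hu, hproc, havail, -⟩ | ⟨u, hu, hproc, havail, -⟩) <;> exact ⟨u, hu, hproc, havail⟩
  · rcases le_or_gt (workDone σ i u) (α * p i) with h | h
    exacts [Or.inl ⟨u, hu, hproc, havail, h⟩, Or.inr ⟨u, hu, hproc, havail, h⟩]

lemma IsSchedule.release_le_of_reaches (hσ : IsSchedule r p σ) (hp : ∀ j, 0 < p j)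
    (hj : availAt r p σ t j) (hji : reaches r p α σ t j i) : r i ≤ t := by
  rcases hji.cases_tail with rfl | ⟨k, -, hki⟩
  · exact hj.1
  · obtain ⟨u, ⟨-, hu⟩, -, hi⟩ := borrowEdge_iff.1 hki
    exact hi.1.trans (hu.trans (hσ.lifeEnd_le (hp k) t))

lemma IsSchedule.Icc_subset_iUnion_lifetime (hσ : IsSchedule r p σ) (hp : ∀ j, 0 < p j)
    (hj : availAt r p σ t j) (hji : reaches r p α σ t j i) :
    Icc (r i) t ⊆ ⋃ (k) (_ : reaches r p α σ t j k), lifetime r p σ t k := by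
  induction hji with
  | refl =>
    have hlife : lifetime r p σ t j = Icc (r j) t := by rw [lifetime, lifeEnd_eq_of_availAt hj]
    rw [← hlife]
    exact subset_iUnion₂ (s := fun k (_ : reaches r p α σ t j k) => lifetime r p σ t k) j .refl
  | @tail k i hjk hki ih =>
    obtain ⟨u, ⟨hku, hu⟩, -, hi⟩ := borrowEdge_iff.1 hki
    have hut : u ≤ t := hu.trans (hσ.lifeEnd_le (hp k) t)
    rintro v ⟨hiv, hvt⟩
    rcases le_total v u with hvu | huv
    · exact mem_iUnion₂.2 ⟨i, hjk.tail hki, hiv,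
        hvu.trans ((hσ.le_lifeEnd_iff (hp i)).2 ⟨hi.2.le, hut⟩)⟩
    · exact ih ⟨hku.trans huv, hvt⟩

lemma IsSchedule.ae_sum_eq_one_of_mem_lifetime (hσ : IsSchedule r p σ) (hni : NonIdling r p σ)
    (hp : ∀ j, 0 < p j) {Q : Finset J} (hQ : ∀ k ∈ Q, ∀ i, borrowEdge r p α σ t k i → i ∈ Q) :
    ∀ᵐ v, v ∈ ⋃ k ∈ Q, lifetime r p σ t k → ∑ i ∈ Q, σ v i = 1 := by
  have hends : ∀ᵐ v, ∀ k, v ≠ lifeEnd p σ t k := ae_all_iff.2 fun k => Measure.ae_ne _ _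
  filter_upwards [hσ.ae_availAt_of_procAt hp, hends] with v hv hne hmem
  obtain ⟨k, hkQ, hkv, hvk⟩ := mem_iUnion₂.1 hmem
  have hk : availAt r p σ v k :=
    ⟨hkv, ((hσ.lt_lifeEnd_iff (hp k)).1 (hvk.lt_of_ne (hne k))).1⟩
  rw [← hni v ⟨k, hk⟩]
  refine Finset.sum_subset (Finset.subset_univ Q) fun i _ hi => ?_
  by_contra hσi
  have hproc : procAt σ v i := (hσ.nonneg v i).lt_of_ne' hσi
  exact hi (hQ k hkQ i (borrowEdge_iff.2 ⟨v, ⟨hkv, hvk⟩, hproc, hv i hproc⟩))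

lemma IsSchedule.sum_workDone_eq_integral (hσ : IsSchedule r p σ) {Q : Finset J} {m : ℝ}
    (hm : 0 ≤ m) (hQ : ∀ i ∈ Q, m ≤ r i) (t : ℝ) :
    ∑ i ∈ Q, workDone σ i t = ∫ v in m..t, ∑ i ∈ Q, σ v i := by
  rw [intervalIntegral.integral_finsetSum fun i _ => hσ.intervalIntegrable i m t]
  refine Finset.sum_congr rfl fun i hi => ?_
  rw [← hσ.workDone_sub_workDone, hσ.workDone_eq_zero_of_le_release hm (hQ i hi), sub_zero]

lemma IsSchedule.sum_p_le_of_not_availAt (hσ : IsSchedule r p σ) (hp : ∀ j, 0 < p j)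
    {Q : Finset J} {m : ℝ} (hm : 0 ≤ m) (hmt : m ≤ t) (hQ : ∀ i ∈ Q, m ≤ r i ∧ r i ≤ t)
    (hQt : ∀ i ∈ Q, ¬ availAt r p σ t i) : ∑ i ∈ Q, p i ≤ t - m := by
  have hdone : ∀ i ∈ Q, p i = workDone σ i t := fun i hi => by
    have := hQt i hi
    rw [hσ.availAt_iff (hp i), not_and, not_lt] at this
    exact le_antisymm (this (hQ i hi).2) (hσ.workDone_le t i)
  rw [Finset.sum_congr rfl hdone, hσ.sum_workDone_eq_integral hm fun i hi => (hQ i hi).1]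
  calc ∫ v in m..t, ∑ i ∈ Q, σ v i ≤ ∫ v in m..t, (1 : ℝ) :=
        intervalIntegral.integral_mono_on hmt (hσ.intervalIntegrable_sum Q m t)
          intervalIntegrable_const fun v _ => (Finset.sum_le_sum_of_subset_of_nonneg
            (Finset.subset_univ Q) fun i _ _ => hσ.nonneg v i).trans (hσ.sum_le_one v)
    _ = t - m := by simp

lemma IsSchedule.sub_le_sum_workDone (hσ : IsSchedule r p σ) (hni : NonIdling r p σ)
    (hp : ∀ j, 0 < p j) {Q : Finset J} (hQ : ∀ k ∈ Q, ∀ i, borrowEdge r p α σ t k i → i ∈ Q)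
    {m : ℝ} (hm : 0 ≤ m) (hmt : m ≤ t) (hmQ : ∀ i ∈ Q, m ≤ r i)
    (hcover : Icc m t ⊆ ⋃ k ∈ Q, lifetime r p σ t k) : t - m ≤ ∑ i ∈ Q, workDone σ i t := by
  rw [hσ.sum_workDone_eq_integral hm hmQ]
  calc t - m = ∫ v in m..t, (1 : ℝ) := by simp
    _ ≤ ∫ v in m..t, ∑ i ∈ Q, σ v i :=
      intervalIntegral.integral_mono_ae_restrict hmt intervalIntegrable_const
        (hσ.intervalIntegrable_sum Q m t) <| (ae_restrict_iff' measurableSet_Icc).2 <| by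
          filter_upwards [hσ.ae_sum_eq_one_of_mem_lifetime hni hp hQ] with v hv hvm
          exact (hv (hcover hvm)).ge

end BorrowGraph

theorem sum_remT_le_sum_workDone_reaches {J : Type*} [Fintype J] {r p : J → ℝ} {α : ℝ}
    {σS σO : ℝ → J → ℝ} (hinst : IsInstance r p α) (hS : IsSchedule r p σS)
    (hSni : NonIdling r p σS) (hO : IsSchedule r p σO) {t : ℝ} (S : Finset J)
    (hSA : ∀ j ∈ S, availAt r p σS t j ∧ ¬ availAt r p σO t j) :
    ∑ j ∈ S, remT p σS j t ≤
      ∑ i with availAt r p σO t i ∧ ∃ j ∈ S, reaches r p α σS t j i, workDone σS i t := by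
  rcases S.eq_empty_or_nonempty with rfl | hSne
  · simp
  let Q : Finset J := {i | ∃ j ∈ S, reaches r p α σS t j i}
  have hmemQ : ∀ {i}, i ∈ Q ↔ ∃ j ∈ S, reaches r p α σS t j i := by simp [Q]
  have hQ : ∀ k ∈ Q, ∀ i, borrowEdge r p α σS t k i → i ∈ Q := fun k hk i hki => by
    obtain ⟨j, hj, hjk⟩ := hmemQ.1 hk
    exact hmemQ.2 ⟨j, hj, hjk.tail hki⟩
  have hSQ : S ⊆ Q := fun j hj => hmemQ.2 ⟨j, hj, .refl⟩
  have hQt : ∀ i ∈ Q, r i ≤ t := fun i hi => by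
    obtain ⟨j, hj, hji⟩ := hmemQ.1 hi
    exact hS.release_le_of_reaches hinst.p_pos (hSA j hj).1 hji
  obtain ⟨i₀, hi₀, hmin⟩ := Q.exists_min_image r (hSne.mono hSQ)
  obtain ⟨j₀, hj₀, hj₀i₀⟩ := hmemQ.1 hi₀
  have hcover : Icc (r i₀) t ⊆ ⋃ k ∈ Q, lifetime r p σS t k :=
    (hS.Icc_subset_iUnion_lifetime hinst.p_pos (hSA j₀ hj₀).1 hj₀i₀).trans <|
      iUnion₂_subset fun k hk => subset_biUnion_of_mem (hmemQ.2 ⟨j₀, hj₀, hk⟩)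
  have hbusy := hS.sub_le_sum_workDone hSni hinst.p_pos hQ (hinst.r_nonneg i₀) (hQt i₀ hi₀)
    hmin hcover
  have hdone := hO.sum_p_le_of_not_availAt hinst.p_pos (Q := {i ∈ Q | ¬ availAt r p σO t i})
    (hinst.r_nonneg i₀) (hQt i₀ hi₀)
    (fun i hi => ⟨hmin i (Finset.mem_filter.1 hi).1, hQt i (Finset.mem_filter.1 hi).1⟩)
    fun i hi => (Finset.mem_filter.1 hi).2
  calc ∑ j ∈ S, remT p σS j t
      ≤ ∑ i ∈ Q with ¬ availAt r p σO t i, (p i - workDone σS i t) :=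
        Finset.sum_le_sum_of_subset_of_nonneg
          (fun j hj => Finset.mem_filter.2 ⟨hSQ hj, (hSA j hj).2⟩)
          fun i _ _ => sub_nonneg.2 (hS.workDone_le t i)
    _ ≤ ∑ i ∈ Q with availAt r p σO t i, workDone σS i t := by
        rw [Finset.sum_sub_distrib]
        linarith [Finset.sum_filter_add_sum_filter_not Q (availAt r p σO t) (workDone σS · t)]
    _ = _ := by
        rw [Finset.filter_filter]
        simp only [and_comm]

/-- **Borrowing values.** For a non-idling schedule `σS`, any
schedule `σO` and a reference time `t`, there are nonnegative borrowing values
`β j i` supported on pairs `j ∈ A(t)∖O(t)`, `i ∈ O(t)` with `i ∈ R_j`, whose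
row sums equal `p_j(t)` and whose column sums are at most `y_i(t)`. -/
theorem stmt6 {J : Type*} [Fintype J] {r p : J → ℝ} {α : ℝ} {σS σO : ℝ → J → ℝ}
    (hinst : IsInstance r p α) (hS : IsSchedule r p σS) (hSni : NonIdling r p σS)
    (hO : IsSchedule r p σO) (t : ℝ) (ht : 0 ≤ t) :
    ∃ β : J → J → ℝ,
      (∀ j i, 0 ≤ β j i) ∧
      (∀ j i, β j i ≠ 0 →
        availAt r p σS t j ∧ ¬ availAt r p σO t j ∧ availAt r p σO t i ∧
          reaches r p α σS t j i) ∧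
      (∀ j, availAt r p σS t j → ¬ availAt r p σO t j →
        ∑ i ∈ Finset.univ.filter (fun i => availAt r p σO t i), β j i
          = remT p σS j t) ∧
      (∀ i, availAt r p σO t i →
        ∑ j ∈ Finset.univ.filter
            (fun j => availAt r p σS t j ∧ ¬ availAt r p σO t j), β j i
          ≤ workDone σS i t) := by
  obtain ⟨β, hβ0, hβsupp, hrow, hcol⟩ := exists_flow_of_hall_on
    (fun j => availAt r p σS t j ∧ ¬ availAt r p σO t j) (availAt r p σO t)
    (fun j _ => sub_nonneg.2 (hS.workDone_le t j)) (fun i _ => hS.workDone_nonneg i ht)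
    (sum_remT_le_sum_workDone_reaches hinst hS hSni hO)
  exact ⟨β, hβ0, fun j i h => and_assoc.1 (hβsupp j i h), fun j hjS hjO => hrow j ⟨hjS, hjO⟩,
    hcol⟩
end

section
/- (Borrowing along non-clairvoyant paths) Consider an ALG-schedule and a reference time t ≥ 0. If a job j ∈ A(t) can reach a job i via a path in the borrow graph consisting only of E_N-edges, then ȳ_j ≥ ȳ_i, where ȳ_j = min(y_j(t), α·(p j)) is the truncated progress. -/
open MeasureTheory Set

open scoped Classical

/-!
The invariant carried along an `E_N`-path `j → ⋯ → k` is that every non-clairvoyant job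
processed during `[r k, t]` has progress at most `ȳ_j`. While some job `k` is available,
ALG only runs a non-clairvoyant job `m` if `y_m ≤ min (y_k, α p_k)`: otherwise `k` itself
(if non-clairvoyant) or the failing SRPT condition (if `k` is clairvoyant) would forbid it.
Starting at the available job `j` this gives the invariant on `[r j, t]`. Along an edge
`k → i`, the job `i` can only gain progress beyond `ȳ_j` while it is run as a
non-clairvoyant job, which the invariant forbids, so `ȳ_i ≤ ȳ_j`; on `[r i, t]` the
invariant then holds while `i` is available (through `ȳ_i`), and after `C_i`, which lies
inside `I_k`, it is inherited from `k`.
-/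

lemma le_cTime {J : Type*} {p : J → ℝ} {σ : ℝ → J → ℝ} {j : J} {a : ℝ}
    (h : ∀ v, workDone σ j v = p j → a ≤ v) : (a : EReal) ≤ cTime p σ j :=
  le_sInf <| forall_mem_image.2 fun v hv => EReal.coe_le_coe_iff.2 (h v hv)

namespace IsSchedule

variable {J : Type*} [Fintype J] {r p : J → ℝ} {σ : ℝ → J → ℝ}

lemma le_one_s11 (hs : IsSchedule r p σ) (u : ℝ) (j : J) : σ u j ≤ 1 :=
  (Finset.single_le_sum (fun k _ => hs.nonneg u k) (Finset.mem_univ j)).trans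
    (hs.sum_le_one u)

lemma intervalIntegrable_s11 (hs : IsSchedule r p σ) (j : J) (a b : ℝ) :
    IntervalIntegrable (fun v => σ v j) volume a b := by
  refine (intervalIntegrable_const (c := (1 : ℝ))).mono_fun
    (hs.meas j).aestronglyMeasurable (Filter.Eventually.of_forall fun v => ?_)
  simpa [abs_of_nonneg (hs.nonneg v j)] using hs.le_one_s11 v j

lemma workDone_add (hs : IsSchedule r p σ) (j : J) (a b : ℝ) :
    workDone σ j b = workDone σ j a + ∫ v in a..b, σ v j :=
  (intervalIntegral.integral_add_adjacent_intervals
    (hs.intervalIntegrable_s11 j 0 a) (hs.intervalIntegrable_s11 j a b)).symm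

lemma workDone_mono (hs : IsSchedule r p σ) (j : J) : Monotone (workDone σ j) := by
  intro a b hab
  rw [hs.workDone_add j a b, le_add_iff_nonneg_right]
  exact intervalIntegral.integral_nonneg hab fun u _ => hs.nonneg u j

lemma workDone_le_add_sub (hs : IsSchedule r p σ) (j : J) {a b : ℝ} (hab : a ≤ b) :
    workDone σ j b ≤ workDone σ j a + (b - a) := by
  have hint : (∫ v in a..b, σ v j) ≤ ∫ _ in a..b, (1 : ℝ) :=
    intervalIntegral.integral_mono_on hab (hs.intervalIntegrable_s11 j a b)
      intervalIntegrable_const fun u _ => hs.le_one_s11 u j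
  rw [hs.workDone_add j a b]
  simpa [hab] using hint

lemma lipschitzWith_workDone (hs : IsSchedule r p σ) (j : J) :
    LipschitzWith 1 (workDone σ j) := by
  refine LipschitzWith.of_le_add fun a b => ?_
  rcases le_total a b with hab | hba
  · linarith [hs.workDone_mono j hab, dist_nonneg (x := a) (y := b)]
  · simpa [Real.dist_eq, abs_of_nonneg (sub_nonneg.2 hba)] using hs.workDone_le_add_sub j hba

lemma workDone_nonpos (hs : IsSchedule r p σ) (j : J) {v : ℝ} (hv : v ≤ 0) :
    workDone σ j v ≤ 0 := by
  simpa [workDone] using hs.workDone_mono j hv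

/-- Work accrues at rate at most one, so the remaining work `δ` of `j` at `v` is a margin
between `v` and every time at which `j` completes. -/
lemma lt_cTime (hs : IsSchedule r p σ) {j : J} {v : ℝ} (h : workDone σ j v < p j) :
    (v : EReal) < cTime p σ j := by
  refine (EReal.coe_lt_coe_iff.2 (lt_add_of_pos_right v (sub_pos.2 h))).trans_le
    (le_cTime fun w hw => ?_)
  rcases le_or_gt w v with hwv | hvw
  · linarith [hs.workDone_mono j hwv]
  · linarith [hs.workDone_le_add_sub j hvw.le]

lemma cTime_nonneg (hs : IsSchedule r p σ) {j : J} (hp : 0 < p j) :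
    (0 : EReal) ≤ cTime p σ j :=
  le_cTime fun v hv => by
    by_contra! hneg
    linarith [hs.workDone_nonpos j hneg.le]

lemma lifeEnd_le_s11 (hs : IsSchedule r p σ) {j : J} (hp : 0 < p j) (t : ℝ) :
    lifeEnd p σ t j ≤ t := by
  unfold lifeEnd
  have hne : min (cTime p σ j) (t : EReal) ≠ ⊥ := by
    simp [ne_bot_of_le_ne_bot EReal.zero_ne_bot (hs.cTime_nonneg hp)]
  simpa using EReal.toReal_le_toReal (min_le_right _ _) hne (EReal.coe_ne_top t)

end IsSchedule

def NcProgressLe {J : Type*} (r p : J → ℝ) (α : ℝ) (σ : ℝ → J → ℝ) (s : Set ℝ) (B : ℝ) :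
    Prop :=
  ∀ v ∈ s, ∀ m, procAt σ v m → ncAt r p α σ v m → workDone σ m v ≤ B

section Borrowing

variable {J : Type*} [Fintype J] {r p : J → ℝ} {α : ℝ} {σ : ℝ → J → ℝ}

omit [Fintype J] in
lemma NcProgressLe.mono {s s' : Set ℝ} {B : ℝ} (h : NcProgressLe r p α σ s B) (hs : s' ⊆ s) :
    NcProgressLe r p α σ s' B :=
  fun v hv => h v (hs hv)

/-- Between the last time `w` at which `y_i ≤ B` and a later time at which `y_i` reaches
`ȳ_i > B`, the job `i` would be non-clairvoyant whenever processed, so `hB` keeps it idle. -/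
lemma IsSchedule.truncY_le (hs : IsSchedule r p σ) (hinst : IsInstance r p α) {i : J}
    {u t B : ℝ} (hru : r i ≤ u) (hut : u ≤ t) (hyu : workDone σ i u ≤ B)
    (hB : NcProgressLe r p α σ (Icc u t) B) : truncY p α σ t i ≤ B := by
  by_contra! hBc
  have hcont := (hs.lipschitzWith_workDone i).continuous
  obtain ⟨v', hv', hyv'⟩ := intermediate_value_Icc hut hcont.continuousOn
    ⟨hyu.trans hBc.le, min_le_left _ _⟩
  set S := Icc u v' ∩ {v | workDone σ i v ≤ B}
  have hSbdd : BddAbove S := bddAbove_Icc.mono inter_subset_left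
  have hwS : sSup S ∈ S := (isClosed_Icc.inter (isClosed_le hcont continuous_const)).csSup_mem
    ⟨u, ⟨le_rfl, hv'.1⟩, hyu⟩ hSbdd
  set w := sSup S
  have hidle : ∀ v ∈ Ioc w v', σ v i = 0 := by
    intro v hv
    have hBv : B < workDone σ i v := by
      by_contra! hvB
      exact hv.1.not_ge (le_csSup hSbdd ⟨⟨hwS.1.1.trans hv.1.le, hv.2⟩, hvB⟩)
    have hyv : workDone σ i v ≤ α * p i :=
      (hs.workDone_mono i hv.2).trans (hyv'.trans_le (min_le_right _ _))
    by_contra hσ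
    have havail : availAt r p σ v i := ⟨hru.trans (hwS.1.1.trans hv.1.le),
      hs.lt_cTime (hyv.trans_lt (mul_lt_of_lt_one_left (hinst.p_pos i) hinst.alpha_mem.2))⟩
    exact hBv.not_ge (hB v ⟨hwS.1.1.trans hv.1.le, hv.2.trans hv'.2⟩ i
      ((hs.nonneg v i).lt_of_ne' hσ) ⟨havail, hyv⟩)
  have hflat : workDone σ i v' = workDone σ i w := by
    rw [hs.workDone_add i w v', intervalIntegral.integral_zero_ae, add_zero]
    exact Filter.Eventually.of_forall fun v hv => hidle v (by rwa [uIoc_of_le hwS.1.2] at hv)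
  linarith [show workDone σ i w ≤ B from hwS.2]

namespace IsALG

lemma not_srptCond_and_isMinNc (halg : IsALG r p α σ) {u : ℝ} {i : J}
    (hproc : procAt σ u i) (hnc : ncAt r p α σ u i) :
    ¬ SrptCond r p α σ u ∧ IsMinNc r p α σ u i := by
  have havail : ∃ j, availAt r p σ u j := ⟨i, hnc.1⟩
  have hnS : ¬ SrptCond r p α σ u := by
    intro hS
    obtain ⟨k, hk, hzero⟩ := halg.srpt_branch u havail hS
    by_cases hik : i = k
    · exact (hik ▸ hk.1.2).not_ge hnc.2
    · exact hproc.ne' (hzero i hik)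
  exact ⟨hnS, (halg.setf_branch u havail hnS).1 i hproc⟩

/-- If the available job `k` is clairvoyant, the failing SRPT condition yields a
non-clairvoyant `j'` with `((1-α)/α) y_{j'} < p_k(v) < (1-α) p_k`, and `y_m ≤ y_{j'}`. -/
lemma workDone_le_min (hinst : IsInstance r p α) (halg : IsALG r p α σ) {v : ℝ} {k m : J}
    (hk : availAt r p σ v k) (hproc : procAt σ v m) (hnc : ncAt r p α σ v m) :
    workDone σ m v ≤ min (workDone σ k v) (α * p k) := by
  obtain ⟨hnS, -, hmin⟩ := halg.not_srptCond_and_isMinNc hproc hnc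
  rcases le_or_gt (workDone σ k v) (α * p k) with hknc | hkcl
  · have hmk := hmin k ⟨hk, hknc⟩
    exact le_min hmk (hmk.trans hknc)
  · obtain ⟨j', hj', hlt⟩ : ∃ j', ncAt r p α σ v j' ∧
        (1 - α) / α * workDone σ j' v < remT p σ k v := by
      simp only [SrptCond, not_exists, not_and, not_forall, not_le, exists_prop] at hnS
      exact hnS k ⟨hk, hkcl⟩
    obtain ⟨hα0, hα1⟩ := hinst.alpha_mem
    have hfac : 0 < (1 - α) / α := div_pos (sub_pos.2 hα1) hα0
    have hrem : remT p σ k v < (1 - α) / α * (α * p k) := by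
      have hscale : (1 - α) / α * (α * p k) = p k - α * p k := by field_simp
      rw [remT, hscale]
      linarith
    have hmα : workDone σ m v < α * p k := lt_of_mul_lt_mul_left (calc
      (1 - α) / α * workDone σ m v ≤ (1 - α) / α * workDone σ j' v :=
          mul_le_mul_of_nonneg_left (hmin j' hj') hfac.le
      _ < (1 - α) / α * (α * p k) := hlt.trans hrem) hfac.le
    exact le_min (hmα.trans hkcl).le hmα.le

lemma workDone_le_truncY (hinst : IsInstance r p α) (halg : IsALG r p α σ) {v t : ℝ}
    {k m : J} (hvt : v ≤ t) (hk : availAt r p σ v k) (hproc : procAt σ v m)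
    (hnc : ncAt r p α σ v m) : workDone σ m v ≤ truncY p α σ t k :=
  (halg.workDone_le_min hinst hk hproc hnc).trans
    (min_le_min_right _ (halg.sched.workDone_mono k hvt))

lemma ncProgressLe_of_availAt (hinst : IsInstance r p α) (halg : IsALG r p α σ) {t : ℝ}
    {j : J} (hj : availAt r p σ t j) :
    NcProgressLe r p α σ (Icc (r j) t) (truncY p α σ t j) :=
  fun _ hv _ hproc hnc => halg.workDone_le_truncY hinst hv.2
    ⟨hv.1, (EReal.coe_le_coe_iff.2 hv.2).trans_lt hj.2⟩ hproc hnc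

end IsALG

namespace ENedge

lemma truncY_le (hinst : IsInstance r p α) (halg : IsALG r p α σ) {t B : ℝ} {k i : J}
    (hki : ENedge r p α σ t k i) (hB : NcProgressLe r p α σ (Icc (r k) t) B) :
    truncY p α σ t i ≤ B := by
  obtain ⟨u, hu, hproc, hnc⟩ := hki
  have hut : u ≤ t := hu.2.trans (halg.sched.lifeEnd_le_s11 (hinst.p_pos k) t)
  have hB' : NcProgressLe r p α σ (Icc u t) B := hB.mono (Icc_subset_Icc_left hu.1)
  exact halg.sched.truncY_le hinst hnc.1.1 hut (hB' u ⟨le_rfl, hut⟩ i hproc hnc) hB'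

lemma ncProgressLe (hinst : IsInstance r p α) (halg : IsALG r p α σ) {t B : ℝ} {k i : J}
    (hki : ENedge r p α σ t k i) (hB : NcProgressLe r p α σ (Icc (r k) t) B)
    (hiB : truncY p α σ t i ≤ B) : NcProgressLe r p α σ (Icc (r i) t) B := by
  obtain ⟨u, hu, -, hnc⟩ := hki
  intro v hv m hproc hmnc
  by_cases hav : (v : EReal) < cTime p σ i
  · exact (halg.workDone_le_truncY hinst hv.2 ⟨hv.1, hav⟩ hproc hmnc).trans hiB
  · -- `i` was still available at `u ∈ I_k`, so it completed after `r k`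
    have huv : u ≤ v := EReal.coe_le_coe_iff.1 (hnc.1.2.trans_le (not_lt.1 hav)).le
    exact hB v ⟨hu.1.trans huv, hv.2⟩ m hproc hmnc

end ENedge

end Borrowing

theorem stmt11_general {J : Type*} [Fintype J] {r p : J → ℝ} {α : ℝ} {σ : ℝ → J → ℝ}
    (hinst : IsInstance r p α) (halg : IsALG r p α σ) (t : ℝ)
    (j i : J) (hj : availAt r p σ t j)
    (hreach : Relation.ReflTransGen (ENedge r p α σ t) j i) :
    truncY p α σ t i ≤ truncY p α σ t j := by
  suffices h : ∀ k, Relation.ReflTransGen (ENedge r p α σ t) j k →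
      truncY p α σ t k ≤ truncY p α σ t j ∧
        NcProgressLe r p α σ (Icc (r k) t) (truncY p α σ t j) from (h i hreach).1
  intro k hk
  induction hk with
  | refl => exact ⟨le_rfl, halg.ncProgressLe_of_availAt hinst hj⟩
  | tail _ hedge ih =>
    have hle := hedge.truncY_le hinst halg ih.2
    exact ⟨hle, hedge.ncProgressLe hinst halg ih.2 hle⟩

/-- **Borrowing along non-clairvoyant paths.** If `j ∈ A(t)` can
reach `i` via a path of `E_N`-edges in the borrow graph, then `ȳ_j ≥ ȳ_i`. -/
theorem stmt11 {J : Type*} [Fintype J] {r p : J → ℝ} {α : ℝ} {σ : ℝ → J → ℝ}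
    (hinst : IsInstance r p α) (halg : IsALG r p α σ) (t : ℝ) (ht : 0 ≤ t)
    (j i : J) (hj : availAt r p σ t j)
    (hreach : Relation.ReflTransGen (ENedge r p α σ t) j i) :
    truncY p α σ t i ≤ truncY p α σ t j :=
  stmt11_general hinst halg t j i hj hreach
end
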